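/- Let u : ℝ³ → ℝ³ be a smooth compactly supported vector field with div u = 0, and let θ : ℝ³ → ℝ be a smooth function. Then ∫_{ℝ³} u(x) · ((θ(x)u(x)) · ∇)(θ(x)u(x)) dx = 0. -/

import Mathlib

open MeasureTheory

lemma integrable_fderiv_apply_aux
    {f : EuclideanSpace ℝ (Fin 3) → ℝ}
    (hf : ContDiff ℝ 1 f) (h : HasCompactSupport f) (v : EuclideanSpace ℝ (Fin 3)) :
    Integrable (fun x => fderiv ℝ f x v) := by
  have hcont : Continuous fun x => fderiv ℝ f x v :=
    (hf.continuous_fderiv one_ne_zero).clm_apply continuous_const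
  have hcs : HasCompactSupport fun x => fderiv ℝ f x v :=
    (h.fderiv ℝ).comp_left (g := fun L : EuclideanSpace ℝ (Fin 3) →L[ℝ] ℝ => L v) rfl
  exact hcont.integrable_of_hasCompactSupport hcs

lemma integral_fderiv_apply_eq_zero
    {f : EuclideanSpace ℝ (Fin 3) → ℝ}
    (hf : ContDiff ℝ 1 f) (h : HasCompactSupport f) (v : EuclideanSpace ℝ (Fin 3)) :
    ∫ x, fderiv ℝ f x v = 0 := by
  have h1 := integrable_fderiv_apply_aux hf h v
  have h2 : Integrable f := hf.continuous.integrable_of_hasCompactSupport h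
  have := integral_mul_fderiv_eq_neg_fderiv_mul_of_integrable
    (μ := (volume : Measure (EuclideanSpace ℝ (Fin 3))))
    (f := fun _ : EuclideanSpace ℝ (Fin 3) => (1:ℝ)) (g := f) (v := v)
    ?_ ?_ ?_ (fun x _ => differentiableAt_const _) (fun x _ => hf.differentiable one_ne_zero x)
  · simpa [fderiv_fun_const] using this
  · simp [fderiv_fun_const]
  · simpa using h1
  · simpa using h2

lemma trilinear_alg (a : ℝ) (Dθ U : Fin 3 → ℝ) (D : Fin 3 → Fin 3 → ℝ) :
    ∑ j : Fin 3, ((2 * a * Dθ j) * (∑ i : Fin 3, U i * U i)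
        + (a * a) * ∑ i : Fin 3, 2 * U i * D j i) * U j
    = 2 * ∑ i : Fin 3, U i * ∑ j : Fin 3, (a * U j) * (a * D j i + U i * Dθ j) := by
  simp only [Finset.mul_sum, Finset.sum_mul, add_mul, ← Finset.sum_add_distrib]
  rw [Finset.sum_comm]
  exact Finset.sum_congr rfl fun i _ => Finset.sum_congr rfl fun j _ => by ring

theorem trilinear_vanishes
    (u : EuclideanSpace ℝ (Fin 3) → EuclideanSpace ℝ (Fin 3))
    (θ : EuclideanSpace ℝ (Fin 3) → ℝ)
    (hu : ContDiff ℝ (⊤ : ℕ∞) u) (hsupp : HasCompactSupport u)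
    (hθ : ContDiff ℝ (⊤ : ℕ∞) θ)
    (hdiv : ∀ x, ∑ j : Fin 3, fderiv ℝ u x (EuclideanSpace.single j (1 : ℝ)) j = 0) :
    ∫ x, ∑ i : Fin 3, u x i *
      (∑ j : Fin 3, (θ x * u x j) *
        fderiv ℝ (fun y => θ y * u y i) x (EuclideanSpace.single j (1 : ℝ))) = 0 := by
  classical
  have hud := hu.differentiable (by simp)
  have hθd := hθ.differentiable (by simp)
  have hproj : ∀ (i : Fin 3) (x : EuclideanSpace ℝ (Fin 3)),
      HasFDerivAt (fun y => u y i) ((EuclideanSpace.proj i).comp (fderiv ℝ u x)) x := fun i x =>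
    (ContinuousLinearMap.hasFDerivAt (f := (EuclideanSpace.proj i :
        EuclideanSpace ℝ (Fin 3) →L[ℝ] ℝ))).comp x (hud x).hasFDerivAt
  have hui : ∀ i : Fin 3, ContDiff ℝ (⊤ : ℕ∞) (fun y => u y i) := fun i =>
    (EuclideanSpace.proj i : EuclideanSpace ℝ (Fin 3) →L[ℝ] ℝ).contDiff.comp hu
  have hSc : ContDiff ℝ (⊤ : ℕ∞) (fun y => ∑ i : Fin 3, u y i * u y i) :=
    ContDiff.sum fun i _ => (hui i).mul (hui i)
  have hψc : ContDiff ℝ (⊤ : ℕ∞) (fun y => (θ y * θ y) * ∑ i : Fin 3, u y i * u y i) :=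
    (hθ.mul hθ).mul hSc
  -- derivative formulas
  have hθu : ∀ (i : Fin 3) (x v : EuclideanSpace ℝ (Fin 3)),
      fderiv ℝ (fun y => θ y * u y i) x v
        = θ x * fderiv ℝ u x v i + u x i * fderiv ℝ θ x v := by
    intro i x v
    rw [((hθd x).hasFDerivAt.fun_mul (hproj i x)).fderiv]
    simp [mul_comm]
  have hSf : ∀ (x v : EuclideanSpace ℝ (Fin 3)),
      fderiv ℝ (fun y => ∑ i : Fin 3, u y i * u y i) x v
        = ∑ i : Fin 3, 2 * u x i * fderiv ℝ u x v i := by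
    intro x v
    have h : HasFDerivAt (fun y => ∑ i : Fin 3, u y i * u y i)
        (∑ i : Fin 3, (u x i • ((EuclideanSpace.proj i).comp (fderiv ℝ u x))
          + u x i • ((EuclideanSpace.proj i).comp (fderiv ℝ u x)))) x :=
      HasFDerivAt.fun_sum fun i _ => (hproj i x).fun_mul (hproj i x)
    rw [h.fderiv]
    simp only [ContinuousLinearMap.sum_apply, ContinuousLinearMap.add_apply,
      ContinuousLinearMap.coe_smul', Pi.smul_apply, ContinuousLinearMap.coe_comp',
      Function.comp_apply, smul_eq_mul]
    exact Finset.sum_congr rfl fun i _ => by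
      show u x i * fderiv ℝ u x v i + u x i * fderiv ℝ u x v i = _
      ring
  have hψf : ∀ (x v : EuclideanSpace ℝ (Fin 3)),
      fderiv ℝ (fun y => (θ y * θ y) * ∑ i : Fin 3, u y i * u y i) x v
        = (2 * θ x * fderiv ℝ θ x v) * (∑ i : Fin 3, u x i * u x i)
          + (θ x * θ x) * ∑ i : Fin 3, 2 * u x i * fderiv ℝ u x v i := by
    intro x v
    have hθθ : HasFDerivAt (fun y => θ y * θ y)
        (θ x • fderiv ℝ θ x + θ x • fderiv ℝ θ x) x :=
      (hθd x).hasFDerivAt.mul (hθd x).hasFDerivAt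
    have hS : HasFDerivAt (fun y => ∑ i : Fin 3, u y i * u y i)
        (fderiv ℝ (fun y => ∑ i : Fin 3, u y i * u y i) x) x :=
      (hSc.differentiable (by simp) x).hasFDerivAt
    rw [(hθθ.fun_mul hS).fderiv]
    simp only [ContinuousLinearMap.add_apply, ContinuousLinearMap.coe_smul', Pi.smul_apply,
      smul_eq_mul, hSf x v]
    ring
  have hwf : ∀ (j : Fin 3) (x v : EuclideanSpace ℝ (Fin 3)),
      fderiv ℝ (fun y => ((θ y * θ y) * ∑ i : Fin 3, u y i * u y i) * u y j) x v
        = fderiv ℝ (fun y => (θ y * θ y) * ∑ i : Fin 3, u y i * u y i) x v * u x j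
          + ((θ x * θ x) * ∑ i : Fin 3, u x i * u x i) * fderiv ℝ u x v j := by
    intro j x v
    rw [((hψc.differentiable (by simp) x).hasFDerivAt.fun_mul (hproj j x)).fderiv]
    simp only [ContinuousLinearMap.add_apply, ContinuousLinearMap.coe_smul', Pi.smul_apply,
      ContinuousLinearMap.coe_comp', Function.comp_apply, smul_eq_mul]
    show _ * fderiv ℝ u x v j + u x j * _ = _
    ring
  -- pointwise identity: divergence of ψ • u equals twice the integrand
  have key : ∀ x : EuclideanSpace ℝ (Fin 3),
      ∑ j : Fin 3, fderiv ℝ (fun y => ((θ y * θ y) * ∑ i : Fin 3, u y i * u y i) * u y j) x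
          (EuclideanSpace.single j (1 : ℝ))
      = 2 * ∑ i : Fin 3, u x i *
          (∑ j : Fin 3, (θ x * u x j) *
            fderiv ℝ (fun y => θ y * u y i) x (EuclideanSpace.single j (1 : ℝ))) := by
    intro x
    have e1 : ∀ j : Fin 3,
        fderiv ℝ (fun y => ((θ y * θ y) * ∑ i : Fin 3, u y i * u y i) * u y j) x
            (EuclideanSpace.single j (1 : ℝ))
          = ((2 * θ x * fderiv ℝ θ x (EuclideanSpace.single j (1 : ℝ)))
                * (∑ i : Fin 3, u x i * u x i)
              + (θ x * θ x) * ∑ i : Fin 3,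
                  2 * u x i * fderiv ℝ u x (EuclideanSpace.single j (1 : ℝ)) i) * u x j
            + ((θ x * θ x) * ∑ i : Fin 3, u x i * u x i)
                * fderiv ℝ u x (EuclideanSpace.single j (1 : ℝ)) j := by
      intro j
      rw [hwf j x _, hψf x _]
    rw [Finset.sum_congr rfl fun j _ => e1 j, Finset.sum_add_distrib, ← Finset.mul_sum,
      hdiv x, mul_zero, add_zero]
    simp only [fun i j => hθu i x (EuclideanSpace.single j (1 : ℝ))]
    exact trilinear_alg (θ x) (fun j => fderiv ℝ θ x (EuclideanSpace.single j (1 : ℝ)))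
      (fun i => u x i) (fun j i => fderiv ℝ u x (EuclideanSpace.single j (1 : ℝ)) i)
  -- compact support and regularity of the field ψ • u
  have hcsj : ∀ j : Fin 3, HasCompactSupport (fun y => u y j) := fun j =>
    hsupp.comp_left (g := fun z : EuclideanSpace ℝ (Fin 3) => z j) rfl
  have hwc : ∀ j : Fin 3, ContDiff ℝ 1
      (fun y => ((θ y * θ y) * ∑ i : Fin 3, u y i * u y i) * u y j) := fun j =>
    (hψc.mul (hui j)).of_le (by simp)
  have hws : ∀ j : Fin 3, HasCompactSupport
      (fun y => ((θ y * θ y) * ∑ i : Fin 3, u y i * u y i) * u y j) := fun j =>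
    (hcsj j).mul_left
  -- the divergence integrates to zero
  have h0 : ∫ x, ∑ j : Fin 3,
      fderiv ℝ (fun y => ((θ y * θ y) * ∑ i : Fin 3, u y i * u y i) * u y j) x
        (EuclideanSpace.single j (1 : ℝ)) = 0 := by
    rw [integral_finset_sum _ fun j _ => integrable_fderiv_apply_aux (hwc j) (hws j) _]
    simp [fun j : Fin 3 => integral_fderiv_apply_eq_zero (hwc j) (hws j)
      (EuclideanSpace.single j (1 : ℝ))]
  rw [integral_congr_ae (Filter.Eventually.of_forall key)] at h0
  rw [MeasureTheory.integral_const_mul] at h0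
  linarith
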